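/- For every positive integer n, the game n·↑ is equivalent (equal as a game value) to the game {0 | (n−1)·↑ + *}. -/

import Mathlib

universe u

/-! Mathlib no longer contains combinatorial game theory (`SetTheory.PGame` was removed);
the notions used below are re-defined here with their old Mathlib meaning. -/
namespace SetTheory

/-- Pre-games, as in the old Mathlib `SetTheory.PGame`. -/
inductive PGame : Type (u + 1)
  | mk : ∀ α β : Type u, (α → PGame) → (β → PGame) → PGame

namespace PGame

def LeftMoves : PGame → Type u
  | mk l _ _ _ => l

def RightMoves : PGame → Type u
  | mk _ r _ _ => r

def moveLeft : ∀ g : PGame, LeftMoves g → PGame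
  | mk _l _ L _ => L

def moveRight : ∀ g : PGame, RightMoves g → PGame
  | mk _ _r _ R => R

def IsOption (x y : PGame) : Prop :=
  (∃ i, x = y.moveLeft i) ∨ ∃ j, x = y.moveRight j

theorem wf_isOption : WellFounded IsOption :=
  ⟨fun x => by
    induction x with
    | mk l r L R IHl IHr =>
      exact Acc.intro _ (by
        rintro y (⟨i, rfl⟩ | ⟨j, rfl⟩)
        exacts [IHl i, IHr j])⟩

instance : WellFoundedRelation PGame := ⟨IsOption, wf_isOption⟩

instance : Zero PGame := ⟨mk PEmpty PEmpty PEmpty.elim PEmpty.elim⟩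

instance : One PGame := ⟨mk PUnit PEmpty (fun _ => 0) PEmpty.elim⟩

/-- The game `* = {0 | 0}`. -/
def star : PGame := mk PUnit PUnit (fun _ => 0) fun _ => 0

/-- The pre-game with left options `L` and right options `R`. -/
def ofLists (L R : List PGame.{u}) : PGame.{u} :=
  mk (ULift (Fin L.length)) (ULift (Fin R.length)) (fun i => L[i.down.1]) fun j => R[j.down.1]

def neg : PGame → PGame
  | mk l r L R => mk r l (fun i => neg (R i)) fun i => neg (L i)

instance : Neg PGame := ⟨neg⟩

def addAux (xl xr : Type u) (fL : xl → PGame → PGame) (fR : xr → PGame → PGame) :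
    PGame → PGame
  | mk yl yr yL yR =>
    mk (xl ⊕ yl) (xr ⊕ yr)
      (Sum.rec (fun i => fL i (mk yl yr yL yR)) fun j => addAux xl xr fL fR (yL j))
      (Sum.rec (fun i => fR i (mk yl yr yL yR)) fun j => addAux xl xr fL fR (yR j))

/-- Disjunctive sum. -/
def add : PGame → PGame → PGame
  | mk xl xr xL xR => addAux xl xr (fun i => add (xL i)) fun j => add (xR j)

instance : Add PGame := ⟨add⟩

def leLFAux (xl xr : Type u) (IL : xl → PGame → Prop × Prop) (IR : xr → PGame → Prop × Prop) :
    PGame → Prop × Prop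
  | mk yl yr yL yR =>
    ((∀ i, (IL i (mk yl yr yL yR)).2) ∧ ∀ j, (leLFAux xl xr IL IR (yR j)).2,
      (∃ i, (leLFAux xl xr IL IR (yL i)).1) ∨ ∃ j, (IR j (mk yl yr yL yR)).1)

/-- `(leLF x y).1` is `x ≤ y`, `(leLF x y).2` is `x ⧏ y`. -/
def leLF : PGame → PGame → Prop × Prop
  | mk xl xr xL xR => leLFAux xl xr (fun i => leLF (xL i)) fun j => leLF (xR j)

instance : LE PGame := ⟨fun x y => (leLF x y).1⟩

instance : LT PGame := ⟨fun x y => x ≤ y ∧ ¬y ≤ x⟩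

def Equiv (x y : PGame) : Prop := x ≤ y ∧ y ≤ x

instance : HasEquiv PGame := ⟨Equiv⟩

end PGame

end SetTheory
open SetTheory PGame
open scoped PGame

/-- The game up, ↑ = {0 | *}. -/
def upG : PGame := ofLists [0] [star]

/-- The game down, ↓ = {* | 0}. -/
def downG : PGame := ofLists [star] [0]

/-- `copies n G` is the disjunctive sum of `n` copies of `G`. -/
def copies : ℕ → PGame → PGame
  | 0, _ => 0
  | n + 1, G => copies n G + G

/-- A game is dicotic (all-small) if either it has no options for either player, or
both players have at least one option and every option is dicotic. -/
def Dicotic (G : PGame) : Prop :=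
  (IsEmpty G.LeftMoves ∧ IsEmpty G.RightMoves ∨
    Nonempty G.LeftMoves ∧ Nonempty G.RightMoves) ∧
    (∀ i, Dicotic (G.moveLeft i)) ∧ ∀ j, Dicotic (G.moveRight j)
termination_by G
decreasing_by
  all_goals first
    | exact (Or.inl ⟨_, rfl⟩ : IsOption _ _)
    | exact (Or.inr ⟨_, rfl⟩ : IsOption _ _)

/-- The dicotic transformation δ: every empty option set is replaced by the single option 0. -/
def delta : PGame → PGame
  | PGame.mk l r L R =>
    PGame.mk (l ⊕ PLift (IsEmpty l)) (r ⊕ PLift (IsEmpty r))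
      (Sum.rec (fun i => delta (L i)) fun _ => 0)
      (Sum.rec (fun j => delta (R j)) fun _ => 0)

/-- A game is infinitesimal if every positive multiple lies strictly between -1 and 1. -/
def Infinitesimal (G : PGame) : Prop :=
  ∀ n : ℕ, 0 < n → copies n G < 1 ∧ -1 < copies n G


/-! Write `G = {0 | (n-1)·↑ + *}`. That `G ≤ n·↑` can be read off the options, since
`n·↑` has the left option `(n-1)·↑ ≥ 0` and its right options are all `(n-1)·↑ + *`.
For `n·↑ ≤ G` one shows by a single induction on `m` that `m·↑ ⧏ G` for `m ≤ n-1`,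
`m·↑ ≤ G` for `m ≤ n` and `m·↑ + * ≤ G` for `m ≤ n-2`: up to equivalence the left options
of `m·↑` and `m·↑ + *` are `(m-1)·↑`, `(m-1)·↑ + *` and `m·↑`, and Right's answer
`(n-1)·↑ + *` in `G` fails because `m·↑ ≤ n·↑ ⧏ (n-1)·↑ + *` and
`m·↑ + * ≤ (n-2)·↑ + * ⧏ (n-1)·↑ + *`. -/

namespace SetTheory
namespace PGame

def LF (x y : PGame.{u}) : Prop := ¬ y ≤ x

infix:50 " ⧏ " => LF

theorem leLF_fst_mk {xl xr yl yr : Type u} {xL : xl → PGame.{u}} {xR : xr → PGame.{u}}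
    {yL : yl → PGame.{u}} {yR : yr → PGame.{u}} :
    (leLF (mk xl xr xL xR) (mk yl yr yL yR)).1 ↔
      (∀ i, (leLF (xL i) (mk yl yr yL yR)).2) ∧ ∀ j, (leLF (mk xl xr xL xR) (yR j)).2 :=
  Iff.rfl

theorem leLF_snd_mk {xl xr yl yr : Type u} {xL : xl → PGame.{u}} {xR : xr → PGame.{u}}
    {yL : yl → PGame.{u}} {yR : yr → PGame.{u}} :
    (leLF (mk xl xr xL xR) (mk yl yr yL yR)).2 ↔
      (∃ i, (leLF (mk xl xr xL xR) (yL i)).1) ∨ ∃ j, (leLF (xR j) (mk yl yr yL yR)).1 :=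
  Iff.rfl

theorem leLF_snd_iff (x y : PGame.{u}) :
    ((leLF x y).2 ↔ ¬ (leLF y x).1) ∧ ((leLF y x).2 ↔ ¬ (leLF x y).1) := by
  induction x generalizing y with
  | mk xl xr xL xR ihxl ihxr =>
  induction y with
  | mk yl yr yL yR ihyl ihyr =>
  constructor <;> rw [leLF_snd_mk, leLF_fst_mk]
  · simp only [fun i => (ihyl i).2, fun j => (ihxr j (mk yl yr yL yR)).2, not_and_or,
      not_forall, not_not]
  · simp only [fun i => (ihxl i (mk yl yr yL yR)).1, fun j => (ihyr j).1, not_and_or,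
      not_forall, not_not]

theorem le_iff_forall_lf {x y : PGame.{u}} :
    x ≤ y ↔ (∀ i, x.moveLeft i ⧏ y) ∧ ∀ j, x ⧏ y.moveRight j := by
  rcases x with ⟨xl, xr, xL, xR⟩
  rcases y with ⟨yl, yr, yL, yR⟩
  refine leLF_fst_mk.trans (and_congr (forall_congr' fun i => (leLF_snd_iff _ _).1)
    (forall_congr' fun j => (leLF_snd_iff _ _).1))

theorem lf_iff_exists_le {x y : PGame.{u}} :
    x ⧏ y ↔ (∃ i, x ≤ y.moveLeft i) ∨ ∃ j, x.moveRight j ≤ y := by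
  simp only [LF, le_iff_forall_lf (x := y), not_and_or, not_forall, not_not]

theorem lf_of_le_moveLeft {x y : PGame.{u}} {i : y.LeftMoves} (h : x ≤ y.moveLeft i) : x ⧏ y :=
  lf_iff_exists_le.2 (.inl ⟨i, h⟩)

theorem lf_of_moveRight_le {x y : PGame.{u}} {j : x.RightMoves} (h : x.moveRight j ≤ y) :
    x ⧏ y :=
  lf_iff_exists_le.2 (.inr ⟨j, h⟩)

theorem moveLeft_lf_of_le {x y : PGame.{u}} (h : x ≤ y) (i : x.LeftMoves) : x.moveLeft i ⧏ y :=
  (le_iff_forall_lf.1 h).1 i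

theorem lf_moveRight_of_le {x y : PGame.{u}} (h : x ≤ y) (j : y.RightMoves) :
    x ⧏ y.moveRight j :=
  (le_iff_forall_lf.1 h).2 j

protected theorem le_refl (x : PGame.{u}) : x ≤ x := by
  induction x with
  | mk xl xr xL xR ihl ihr =>
  exact le_iff_forall_lf.2
    ⟨fun i => lf_of_le_moveLeft (ihl i), fun j => lf_of_moveRight_le (ihr j)⟩

/- All three rotations of `(x, y, z)` are proved at once: each recursive call replaces one
of the three games by an option, in a different position. -/
theorem le_trans_aux (x y z : PGame.{u}) :
    (x ≤ y → y ≤ z → x ≤ z) ∧ (y ≤ z → z ≤ x → y ≤ x) ∧ (z ≤ x → x ≤ y → z ≤ y) := by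
  induction x generalizing y z with
  | mk xl xr xL xR ihxl ihxr =>
  induction y generalizing z with
  | mk yl yr yL yR ihyl ihyr =>
  induction z with
  | mk zl zr zL zR ihzl ihzr =>
  refine ⟨fun h₁ h₂ => ?_, fun h₁ h₂ => ?_, fun h₁ h₂ => ?_⟩ <;>
    refine le_iff_forall_lf.2 ⟨fun i h => ?_, fun j h => ?_⟩
  · exact moveLeft_lf_of_le h₁ i ((ihxl i _ _).2.1 h₂ h)
  · exact lf_moveRight_of_le h₂ j ((ihzr j).2.2 h h₁)
  · exact moveLeft_lf_of_le h₁ i ((ihyl i _).2.2 h₂ h)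
  · exact lf_moveRight_of_le h₂ j ((ihxr j _ _).1 h h₁)
  · exact moveLeft_lf_of_le h₁ i ((ihzl i).1 h₂ h)
  · exact lf_moveRight_of_le h₂ j ((ihyr j _).2.1 h h₁)

instance : Preorder PGame.{u} where
  le_refl := PGame.le_refl
  le_trans x y z := (le_trans_aux x y z).1
  lt_iff_le_not_ge _ _ := Iff.rfl

theorem lf_of_le_of_lf {x y z : PGame.{u}} (h₁ : x ≤ y) (h₂ : y ⧏ z) : x ⧏ z :=
  fun h => h₂ (h.trans h₁)

theorem Equiv.le {x y : PGame.{u}} (h : x ≈ y) : x ≤ y := h.1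

theorem Equiv.ge {x y : PGame.{u}} (h : x ≈ y) : y ≤ x := h.2

@[refl] theorem Equiv.refl (x : PGame.{u}) : x ≈ x := ⟨le_rfl, le_rfl⟩

theorem Equiv.symm {x y : PGame.{u}} (h : x ≈ y) : y ≈ x := ⟨h.ge, h.le⟩

theorem Equiv.trans {x y z : PGame.{u}} (h₁ : x ≈ y) (h₂ : y ≈ z) : x ≈ z :=
  ⟨h₁.le.trans h₂.le, h₂.ge.trans h₁.ge⟩

theorem le_congr_left {x₁ x₂ y : PGame.{u}} (h : x₁ ≈ x₂) : x₁ ≤ y ↔ x₂ ≤ y :=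
  ⟨h.ge.trans, h.le.trans⟩

theorem le_congr_right {x y₁ y₂ : PGame.{u}} (h : y₁ ≈ y₂) : x ≤ y₁ ↔ x ≤ y₂ :=
  ⟨(·.trans h.le), (·.trans h.ge)⟩

theorem lf_congr_left {x₁ x₂ y : PGame.{u}} (h : x₁ ≈ x₂) : x₁ ⧏ y ↔ x₂ ⧏ y :=
  not_congr (le_congr_right h)

theorem lf_congr_right {x y₁ y₂ : PGame.{u}} (h : y₁ ≈ y₂) : x ⧏ y₁ ↔ x ⧏ y₂ :=
  not_congr (le_congr_left h)

theorem Equiv.of_exists {x y : PGame.{u}}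
    (hl₁ : ∀ i, ∃ j, x.moveLeft i ≈ y.moveLeft j)
    (hr₁ : ∀ i, ∃ j, x.moveRight i ≈ y.moveRight j)
    (hl₂ : ∀ j, ∃ i, x.moveLeft i ≈ y.moveLeft j)
    (hr₂ : ∀ j, ∃ i, x.moveRight i ≈ y.moveRight j) :
    x ≈ y := by
  refine ⟨le_iff_forall_lf.2 ⟨fun i => ?_, fun j => ?_⟩,
    le_iff_forall_lf.2 ⟨fun j => ?_, fun i => ?_⟩⟩
  · obtain ⟨j, hj⟩ := hl₁ i; exact lf_of_le_moveLeft hj.le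
  · obtain ⟨i, hi⟩ := hr₂ j; exact lf_of_moveRight_le hi.le
  · obtain ⟨i, hi⟩ := hl₂ j; exact lf_of_le_moveLeft hi.ge
  · obtain ⟨j, hj⟩ := hr₁ i; exact lf_of_moveRight_le hj.ge

instance : Inhabited star.{u}.LeftMoves := ⟨(PUnit.unit : PUnit)⟩

instance : Inhabited star.{u}.RightMoves := ⟨(PUnit.unit : PUnit)⟩

theorem zero_lf_star : (0 : PGame.{u}) ⧏ star :=
  lf_of_le_moveLeft (i := default) le_rfl

section OfListsSingleton

variable {a b x y : PGame.{u}}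

theorem ofLists_singleton_moveLeft (i : (ofLists [a] [b]).LeftMoves) :
    (ofLists [a] [b]).moveLeft i = a := by
  obtain ⟨i⟩ := i; fin_cases i; rfl

theorem ofLists_singleton_moveRight (j : (ofLists [a] [b]).RightMoves) :
    (ofLists [a] [b]).moveRight j = b := by
  obtain ⟨j⟩ := j; fin_cases j; rfl

theorem lf_ofLists_singleton_of_le (h : x ≤ a) : x ⧏ ofLists [a] [b] :=
  lf_of_le_moveLeft (i := ULift.up 0) h

theorem ofLists_singleton_lf_of_le (h : b ≤ y) : ofLists [a] [b] ⧏ y :=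
  lf_of_moveRight_le (j := ULift.up 0) h

theorem le_ofLists_singleton_iff :
    x ≤ ofLists [a] [b] ↔ (∀ i, x.moveLeft i ⧏ ofLists [a] [b]) ∧ x ⧏ b := by
  rw [le_iff_forall_lf]
  simp only [ofLists_singleton_moveRight]
  exact and_congr_right' ⟨fun h => h (ULift.up 0), fun h _ => h⟩

theorem ofLists_singleton_le_iff :
    ofLists [a] [b] ≤ y ↔ a ⧏ y ∧ ∀ j, ofLists [a] [b] ⧏ y.moveRight j := by
  rw [le_iff_forall_lf]
  simp only [ofLists_singleton_moveLeft]
  exact and_congr_left' ⟨fun h => h (ULift.up 0), fun h _ => h⟩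

end OfListsSingleton

def toLeftMovesAdd {x y : PGame.{u}} (i : x.LeftMoves ⊕ y.LeftMoves) : (x + y).LeftMoves :=
  match x, y, i with
  | mk _ _ _ _, mk _ _ _ _, i => i

def toRightMovesAdd {x y : PGame.{u}} (i : x.RightMoves ⊕ y.RightMoves) : (x + y).RightMoves :=
  match x, y, i with
  | mk _ _ _ _, mk _ _ _ _, i => i

theorem add_moveLeft_inl {x y : PGame.{u}} (i : x.LeftMoves) :
    (x + y).moveLeft (toLeftMovesAdd (.inl i)) = x.moveLeft i + y := by
  cases x; cases y; rfl

theorem add_moveLeft_inr {x y : PGame.{u}} (i : y.LeftMoves) :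
    (x + y).moveLeft (toLeftMovesAdd (.inr i)) = x + y.moveLeft i := by
  cases x; cases y; rfl

theorem add_moveRight_inl {x y : PGame.{u}} (j : x.RightMoves) :
    (x + y).moveRight (toRightMovesAdd (.inl j)) = x.moveRight j + y := by
  cases x; cases y; rfl

theorem add_moveRight_inr {x y : PGame.{u}} (j : y.RightMoves) :
    (x + y).moveRight (toRightMovesAdd (.inr j)) = x + y.moveRight j := by
  cases x; cases y; rfl

@[elab_as_elim]
theorem leftMoves_add_cases {x y : PGame.{u}} {P : (x + y).LeftMoves → Prop}
    (k : (x + y).LeftMoves) (hl : ∀ i, P (toLeftMovesAdd (.inl i)))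
    (hr : ∀ i, P (toLeftMovesAdd (.inr i))) : P k := by
  cases x; cases y
  rcases k with i | i
  exacts [hl i, hr i]

@[elab_as_elim]
theorem rightMoves_add_cases {x y : PGame.{u}} {P : (x + y).RightMoves → Prop}
    (k : (x + y).RightMoves) (hl : ∀ j, P (toRightMovesAdd (.inl j)))
    (hr : ∀ j, P (toRightMovesAdd (.inr j))) : P k := by
  cases x; cases y
  rcases k with j | j
  exacts [hl j, hr j]

theorem add_le_iff_forall_lf {x y z : PGame.{u}} :
    x + y ≤ z ↔ (∀ i, x.moveLeft i + y ⧏ z) ∧ (∀ i, x + y.moveLeft i ⧏ z) ∧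
      ∀ j, x + y ⧏ z.moveRight j := by
  rw [le_iff_forall_lf, ← and_assoc]
  refine and_congr_left' ⟨fun h => ⟨fun i => ?_, fun i => ?_⟩, fun h k => ?_⟩
  · simpa only [add_moveLeft_inl] using h (toLeftMovesAdd (.inl i))
  · simpa only [add_moveLeft_inr] using h (toLeftMovesAdd (.inr i))
  · refine leftMoves_add_cases k (fun i => ?_) fun i => ?_
    · simpa only [add_moveLeft_inl] using h.1 i
    · simpa only [add_moveLeft_inr] using h.2 i

theorem add_comm_equiv (x y : PGame.{u}) : x + y ≈ y + x := by
  induction x generalizing y with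
  | mk xl xr xL xR ihl ihr =>
  induction y with
  | mk yl yr yL yR jhl jhr =>
  apply Equiv.of_exists
  · rintro (i | i)
    exacts [⟨.inr i, ihl i _⟩, ⟨.inl i, jhl i⟩]
  · rintro (i | i)
    exacts [⟨.inr i, ihr i _⟩, ⟨.inl i, jhr i⟩]
  · rintro (i | i)
    exacts [⟨.inr i, jhl i⟩, ⟨.inl i, ihl i _⟩]
  · rintro (i | i)
    exacts [⟨.inr i, jhr i⟩, ⟨.inl i, ihr i _⟩]

theorem add_zero_equiv (x : PGame.{u}) : x + 0 ≈ x := by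
  induction x with
  | mk xl xr xL xR ihl ihr =>
  apply Equiv.of_exists
  · rintro (i | ⟨⟨⟩⟩)
    exact ⟨i, ihl i⟩
  · rintro (i | ⟨⟨⟩⟩)
    exact ⟨i, ihr i⟩
  · exact fun i => ⟨.inl i, ihl i⟩
  · exact fun i => ⟨.inl i, ihr i⟩

theorem add_assoc_equiv (x y z : PGame.{u}) : x + y + z ≈ x + (y + z) := by
  induction x generalizing y z with
  | mk xl xr xL xR ihxl ihxr =>
  induction y generalizing z with
  | mk yl yr yL yR ihyl ihyr =>
  induction z with
  | mk zl zr zL zR ihzl ihzr =>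
  apply Equiv.of_exists
  · rintro ((i | i) | i)
    exacts [⟨.inl i, ihxl i _ _⟩, ⟨.inr (.inl i), ihyl i _⟩, ⟨.inr (.inr i), ihzl i⟩]
  · rintro ((i | i) | i)
    exacts [⟨.inl i, ihxr i _ _⟩, ⟨.inr (.inl i), ihyr i _⟩, ⟨.inr (.inr i), ihzr i⟩]
  · rintro (i | i | i)
    exacts [⟨.inl (.inl i), ihxl i _ _⟩, ⟨.inl (.inr i), ihyl i _⟩, ⟨.inr i, ihzl i⟩]
  · rintro (i | i | i)
    exacts [⟨.inl (.inl i), ihxr i _ _⟩, ⟨.inl (.inr i), ihyr i _⟩, ⟨.inr i, ihzr i⟩]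

theorem add_le_lf_add_right_aux (x y z : PGame.{u}) :
    (x ≤ y → x + z ≤ y + z) ∧ (x ⧏ y → x + z ⧏ y + z) := by
  induction x generalizing y z with
  | mk xl xr xL xR ihxl ihxr =>
  induction y generalizing z with
  | mk yl yr yL yR ihyl ihyr =>
  induction z with
  | mk zl zr zL zR ihzl ihzr =>
  refine ⟨fun h => le_iff_forall_lf.2 ⟨?_, ?_⟩, fun h => ?_⟩
  · rintro (i | k)
    · exact (ihxl i _ _).2 (moveLeft_lf_of_le h i)
    · exact lf_of_le_moveLeft (i := .inr k) ((ihzl k).1 h)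
  · rintro (j | k)
    · exact (ihyr j _).2 (lf_moveRight_of_le h j)
    · exact lf_of_moveRight_le (j := .inr k) ((ihzr k).1 h)
  · rcases lf_iff_exists_le.1 h with ⟨i, hi⟩ | ⟨j, hj⟩
    · exact lf_of_le_moveLeft (i := .inl i) ((ihyl i _).1 hi)
    · exact lf_of_moveRight_le (j := .inl j) ((ihxr j _ _).1 hj)

theorem add_le_add_right {x y : PGame.{u}} (h : x ≤ y) (z : PGame.{u}) : x + z ≤ y + z :=
  (add_le_lf_add_right_aux x y z).1 h

theorem add_lf_add_right {x y : PGame.{u}} (h : x ⧏ y) (z : PGame.{u}) : x + z ⧏ y + z :=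
  (add_le_lf_add_right_aux x y z).2 h

theorem add_le_add_left {x y : PGame.{u}} (h : x ≤ y) (z : PGame.{u}) : z + x ≤ z + y :=
  (add_comm_equiv z x).le.trans ((add_le_add_right h z).trans (add_comm_equiv y z).le)

theorem add_congr_left {x y z : PGame.{u}} (h : x ≈ y) : x + z ≈ y + z :=
  ⟨add_le_add_right h.le z, add_le_add_right h.ge z⟩

theorem add_congr_right {x y z : PGame.{u}} (h : x ≈ y) : z + x ≈ z + y :=
  ⟨add_le_add_left h.le z, add_le_add_left h.ge z⟩

theorem add_right_comm_equiv (x y z : PGame.{u}) : x + y + z ≈ x + z + y :=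
  (add_assoc_equiv x y z).trans <|
    (add_congr_right (add_comm_equiv y z)).trans (add_assoc_equiv x z y).symm

theorem add_star_lf_of_le {x y : PGame.{u}} (h : x ≤ y) : x + star ⧏ y :=
  lf_of_moveRight_le (j := toRightMovesAdd (.inr default))
    (by rw [add_moveRight_inr]; exact (add_zero_equiv x).le.trans h)

end PGame
end SetTheory

section Copies

variable {G : PGame.{u}}

theorem copies_add_moveLeft_equiv {a : PGame.{u}} (hG : ∀ i, G.moveLeft i ≈ a) (k : ℕ)
    (i : (copies k G + G).LeftMoves) : (copies k G + G).moveLeft i ≈ copies k G + a := by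
  induction k with
  | zero =>
    refine leftMoves_add_cases i (fun i => (i : PEmpty).elim) fun i => ?_
    rw [add_moveLeft_inr]
    exact add_congr_right (hG i)
  | succ k ih =>
    refine leftMoves_add_cases i (fun i => ?_) fun i => ?_
    · rw [add_moveLeft_inl]
      exact (add_congr_left (ih i)).trans (add_right_comm_equiv _ _ _)
    · rw [add_moveLeft_inr]
      exact add_congr_right (hG i)

theorem copies_add_moveRight_equiv {b : PGame.{u}} (hG : ∀ j, G.moveRight j ≈ b) (k : ℕ)
    (j : (copies k G + G).RightMoves) : (copies k G + G).moveRight j ≈ copies k G + b := by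
  induction k with
  | zero =>
    refine rightMoves_add_cases j (fun j => (j : PEmpty).elim) fun j => ?_
    rw [add_moveRight_inr]
    exact add_congr_right (hG j)
  | succ k ih =>
    refine rightMoves_add_cases j (fun j => ?_) fun j => ?_
    · rw [add_moveRight_inl]
      exact (add_congr_left (ih j)).trans (add_right_comm_equiv _ _ _)
    · rw [add_moveRight_inr]
      exact add_congr_right (hG j)

theorem copies_le_copies_succ (hG : 0 ≤ G) (k : ℕ) : copies k G ≤ copies (k + 1) G :=
  (add_zero_equiv _).ge.trans (add_le_add_left hG _)

theorem copies_mono (hG : 0 ≤ G) : Monotone fun k => copies k G :=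
  monotone_nat_of_le_succ (copies_le_copies_succ hG)

end Copies

section Up

theorem zero_le_upG : (0 : PGame.{u}) ≤ upG :=
  le_ofLists_singleton_iff.2 ⟨fun i => (i : PEmpty).elim, zero_lf_star⟩

instance : Inhabited upG.{u}.LeftMoves := ⟨ULift.up 0⟩

instance : Inhabited upG.{u}.RightMoves := ⟨ULift.up 0⟩

theorem upG_moveLeft (i : upG.{u}.LeftMoves) : upG.moveLeft i = 0 :=
  ofLists_singleton_moveLeft i

theorem upG_moveRight (j : upG.{u}.RightMoves) : upG.moveRight j = star :=
  ofLists_singleton_moveRight j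

theorem copies_upG_succ_moveLeft_equiv (k : ℕ) (i : (copies (k + 1) upG.{u}).LeftMoves) :
    (copies (k + 1) upG).moveLeft i ≈ copies k upG :=
  (copies_add_moveLeft_equiv (fun i => by rw [upG_moveLeft]) k i).trans (add_zero_equiv _)

theorem copies_upG_succ_moveRight_equiv (k : ℕ) (j : (copies (k + 1) upG.{u}).RightMoves) :
    (copies (k + 1) upG).moveRight j ≈ copies k upG + star :=
  copies_add_moveRight_equiv (fun j => by rw [upG_moveRight]) k j

theorem lf_add_upG_of_le {x y : PGame.{u}} (h : x ≤ y) : x ⧏ y + upG :=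
  lf_of_le_moveLeft (i := toLeftMovesAdd (.inr default))
    (by rw [add_moveLeft_inr, upG_moveLeft]; exact h.trans (add_zero_equiv _).ge)

theorem add_upG_lf_of_le {x y : PGame.{u}} (h : x + star ≤ y) : x + upG ⧏ y :=
  lf_of_moveRight_le (j := toRightMovesAdd (.inr default))
    (by rw [add_moveRight_inr, upG_moveRight]; exact h)

theorem copies_upG_lf_copies_upG_add_star {m N : ℕ} (h : m ≤ N + 1) :
    copies m upG.{u} ⧏ copies N upG + star :=
  lf_of_le_of_lf (copies_mono zero_le_upG h) (add_upG_lf_of_le le_rfl)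

theorem copies_upG_add_star_lf {m N : ℕ} (h : m < N) :
    copies m upG.{u} + star ⧏ copies N upG + star := by
  obtain ⟨N, rfl⟩ := Nat.exists_eq_add_one_of_ne_zero (Nat.ne_zero_of_lt h)
  exact add_lf_add_right
    (lf_add_upG_of_le (copies_mono zero_le_upG (Nat.le_of_lt_succ h))) star

theorem copies_upG_lf_and_le_ofLists (N m : ℕ) :
    (m ≤ N → copies m upG.{u} ⧏ ofLists [0] [copies N upG + star]) ∧
    (m ≤ N + 1 → copies m upG.{u} ≤ ofLists [0] [copies N upG + star]) ∧
    (m + 1 ≤ N → copies m upG.{u} + star ≤ ofLists [0] [copies N upG + star]) := by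
  induction m with
  | zero =>
    have hlf : copies 0 upG.{u} ⧏ ofLists [0] [copies N upG + star] :=
      lf_ofLists_singleton_of_le le_rfl
    refine ⟨fun _ => hlf, fun h => ?_, fun h => ?_⟩
    · exact le_ofLists_singleton_iff.2
        ⟨fun i => (i : PEmpty).elim, copies_upG_lf_copies_upG_add_star h⟩
    · refine add_le_iff_forall_lf.2 ⟨fun i => (i : PEmpty).elim, fun i => ?_, fun j => ?_⟩
      · exact (lf_congr_left (add_zero_equiv _)).2 hlf
      · rw [ofLists_singleton_moveRight]
        exact copies_upG_add_star_lf h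
  | succ k ih =>
    obtain ⟨hlf, hle, hstar⟩ := ih
    have hlf' : k + 1 ≤ N → copies (k + 1) upG.{u} ⧏ ofLists [0] [copies N upG + star] :=
      fun h => add_upG_lf_of_le (hstar h)
    refine ⟨hlf', fun h => ?_, fun h => ?_⟩
    · refine le_ofLists_singleton_iff.2 ⟨fun i => ?_, copies_upG_lf_copies_upG_add_star h⟩
      exact (lf_congr_left (copies_upG_succ_moveLeft_equiv k i)).2 (hlf (by omega))
    · refine add_le_iff_forall_lf.2 ⟨fun i => ?_, fun i => ?_, fun j => ?_⟩
      · exact add_star_lf_of_le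
          ((le_congr_left (copies_upG_succ_moveLeft_equiv k i)).2 (hle (by omega)))
      · exact (lf_congr_left (add_zero_equiv _)).2 (hlf' (by omega))
      · rw [ofLists_singleton_moveRight]
        exact copies_upG_add_star_lf h

theorem ofLists_le_copies_upG_succ (N : ℕ) :
    ofLists [0] [copies N upG.{u} + star] ≤ copies (N + 1) upG :=
  ofLists_singleton_le_iff.2 ⟨lf_add_upG_of_le (copies_mono zero_le_upG N.zero_le),
    fun j => (lf_congr_right (copies_upG_succ_moveRight_equiv N j)).2
      (ofLists_singleton_lf_of_le le_rfl)⟩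

end Up

theorem stmt2 : ∀ n : ℕ, 0 < n →
    copies n upG ≈ ofLists [0] [copies (n - 1) upG + star] := by
  intro n hn
  obtain ⟨N, rfl⟩ := Nat.exists_eq_add_one_of_ne_zero hn.ne'
  rw [Nat.add_sub_cancel]
  exact ⟨(copies_upG_lf_and_le_ofLists N (N + 1)).2.1 le_rfl, ofLists_le_copies_upG_succ N⟩
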